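/- arXiv:2401.06277 — 2 statements merged into one kernel-verified Lean document; each statement's English description precedes it below -/
import Mathlib

section
/- Let n, m be positive integers with m ≤ n, let L be a symmetric positive definite n×n real matrix, and let B be an m×n real matrix whose transpose Bᵀ is injective (B has full row rank). Then the saddle-point matrix A = [[L, Bᵀ], [B, 0]] is invertible. -/
open Matrix

/-- If `L` is symmetric positive definite and `Bᵀ` is injective (full row rank of `B`),
then the saddle-point matrix `A = [[L, Bᵀ], [B, 0]]` is invertible. -/
theorem saddle_point_matrix_invertible
    (n m : ℕ) (hn : 0 < n) (hm : 0 < m) (hmn : m ≤ n)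
    (L : Matrix (Fin n) (Fin n) ℝ) (B : Matrix (Fin m) (Fin n) ℝ)
    (hLsym : Lᵀ = L)
    (hLpos : ∀ x : Fin n → ℝ, x ≠ 0 → 0 < x ⬝ᵥ (L *ᵥ x))
    (hB : Function.Injective fun q : Fin m → ℝ => Bᵀ *ᵥ q) :
    IsUnit (fromBlocks L Bᵀ B (0 : Matrix (Fin m) (Fin m) ℝ)) := by
  rw [← Matrix.mulVec_injective_iff_isUnit, ← Matrix.coe_mulVecLin,
    injective_iff_map_eq_zero]
  intro v hv
  simp only [Matrix.coe_mulVecLin] at hv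
  set x : Fin n → ℝ := v ∘ Sum.inl with hxdef
  set y : Fin m → ℝ := v ∘ Sum.inr with hydef
  have hvelim : v = Sum.elim x y := by
    funext i; cases i <;> rfl
  rw [hvelim, Matrix.fromBlocks_mulVec] at hv
  have h1 : L *ᵥ x + Bᵀ *ᵥ y = 0 := by
    funext i; exact congrFun hv (Sum.inl i)
  have h2 : B *ᵥ x = 0 := by
    have := congrArg (· ∘ Sum.inr) hv
    funext i
    have := congrFun hv (Sum.inr i)
    simpa using this
  have hx0 : x = 0 := by
    by_contra hx0
    have hpos := hLpos x hx0
    have : x ⬝ᵥ (L *ᵥ x) + x ⬝ᵥ (Bᵀ *ᵥ y) = 0 := by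
      rw [← dotProduct_add, h1, dotProduct_zero]
    have hz : x ⬝ᵥ (Bᵀ *ᵥ y) = 0 := by
      rw [dotProduct_mulVec, vecMul_transpose, h2, zero_dotProduct]
    linarith
  have hy0 : y = 0 := by
    have hBy : Bᵀ *ᵥ y = 0 := by
      rw [hx0, mulVec_zero, zero_add] at h1
      exact h1
    apply hB
    simpa [mulVec_zero] using hBy
  rw [hvelim, hx0, hy0]
  funext i; cases i <;> rfl
end

section
/- Let n, m be positive integers with m ≤ n, D a symmetric positive definite n×n real matrix, B an m×n real matrix whose transpose Bᵀ is injective, and t > 0 a real number. Then the block matrix [[tD, Bᵀ], [B, 0]] is invertible. -/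
open Matrix

/-- If `D` is symmetric positive definite, `Bᵀ` is injective, and `t > 0`, then the
approximate saddle-point matrix `[[tD, Bᵀ], [B, 0]]` of the original Braess–Sarazin
relaxation is invertible. -/
theorem braess_sarazin_matrix_invertible
    (n m : ℕ) (hn : 0 < n) (hm : 0 < m) (hmn : m ≤ n)
    (D : Matrix (Fin n) (Fin n) ℝ) (B : Matrix (Fin m) (Fin n) ℝ)
    (t : ℝ) (ht : 0 < t)
    (hDsym : Dᵀ = D)
    (hDpos : ∀ x : Fin n → ℝ, x ≠ 0 → 0 < x ⬝ᵥ (D *ᵥ x))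
    (hB : Function.Injective fun q : Fin m → ℝ => Bᵀ *ᵥ q) :
    IsUnit (fromBlocks (t • D) Bᵀ B (0 : Matrix (Fin m) (Fin m) ℝ)) := by
  rw [← Matrix.mulVec_injective_iff_isUnit]
  have key : ∀ z : Fin n ⊕ Fin m → ℝ,
      fromBlocks (t • D) Bᵀ B 0 *ᵥ z = 0 → z = 0 := by
    intro z hz
    set x : Fin n → ℝ := z ∘ Sum.inl with hx
    set q : Fin m → ℝ := z ∘ Sum.inr with hq
    have hz' : z = Sum.elim x q := by funext i; cases i <;> rfl
    rw [hz', fromBlocks_mulVec] at hz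
    have h1 : (t • D) *ᵥ x + Bᵀ *ᵥ q = 0 := by
      funext i; simpa using congrFun hz (Sum.inl i)
    have h2 : B *ᵥ x = 0 := by
      funext i; simpa using congrFun hz (Sum.inr i)
    -- take inner product with x
    have hdot : t * (x ⬝ᵥ (D *ᵥ x)) + x ⬝ᵥ (Bᵀ *ᵥ q) = 0 := by
      have := congrArg (fun v => x ⬝ᵥ v) h1
      simpa [dotProduct_add, smul_mulVec, dotProduct_smul, smul_eq_mul] using this
    have hcross : x ⬝ᵥ (Bᵀ *ᵥ q) = 0 := by
      rw [dotProduct_mulVec, vecMul_transpose, h2, zero_dotProduct]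
    have hxz : x = 0 := by
      by_contra hxne
      have := hDpos x hxne
      nlinarith [hdot, hcross]
    have hqz : q = 0 := by
      apply hB
      have : Bᵀ *ᵥ q = 0 := by
        have := h1
        rw [hxz] at this
        simpa using this
      simpa [this] using (mulVec_zero Bᵀ).symm
    rw [hz', hxz, hqz]
    funext i; cases i <;> rfl
  intro a b hab
  have : a - b = 0 := key (a - b) (by rw [mulVec_sub, hab, sub_self])
  exact sub_eq_zero.mp this
end
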